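/- For every m ∈ ℕ, ∫_{ℝ³} φ_m(x)·φ_0(y)·φ_0(z)·φ_m((2x+2y−z)/3)·φ_0((−x+2y+2z)/3)·φ_0((2x−y+2z)/3) dx dy dz = (2/3)^m, where φ_m denotes the m-th Hermite function. -/

import Mathlib

open scoped BigOperators
open MeasureTheory

/-- The physicists' Hermite polynomial `H_m(x) = 2^{m/2}·He_m(x√2)`, where `He_m` is
the probabilists' Hermite polynomial. -/
noncomputable def physHermite (m : ℕ) (x : ℝ) : ℝ :=
  (2 : ℝ) ^ ((m : ℝ) / 2) * Polynomial.aeval (x * Real.sqrt 2) (Polynomial.hermite m)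

/-- The `m`-th Hermite function `φ_m(x) = (2^m·m!·√π)^{−1/2}·H_m(x)·e^{−x²/2}`. -/
noncomputable def hermiteFun (m : ℕ) (x : ℝ) : ℝ :=
  ((2 : ℝ) ^ m * (m.factorial : ℝ) * Real.sqrt Real.pi) ^ (-(1 / 2 : ℝ)) *
    physHermite m x * Real.exp (-x ^ 2 / 2)

/-!
Write `φ_m(x) = c_m H_m(x) e^{-x²/2}`. The rotation is orthogonal, so the six Gaussian factors
combine into `e^{-(x²+y²+z²)}` and the integrand becomes `H_m(x) H_m(u) e^{-(x²+y²+z²)}` with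
`u = (2x+2y-z)/3`. For `a² + b² = 1` one has `∫ H_n(a t + b s) e^{-t²} dt = √π bⁿ H_n(s)`, by the
three-term recurrence and Gaussian integration by parts `∫ t p(t) e^{-t²} = ½ ∫ p'(t) e^{-t²}`.
Integrating out `z` (with `b = 2√2/3`) and then `y` (with `b = 1/√2`) leaves
`π (2/3)^m ∫ H_m(x)² e^{-x²} dx = π (2/3)^m 2^m m! √π`, which the normalisation `c_m² c_0⁴`
reduces to `(2/3)^m`.
-/

open Real Polynomial

theorem Polynomial.derivative_hermite_succ (n : ℕ) :
    derivative (hermite (n + 1)) = C ((n : ℤ) + 1) * hermite n := by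
  induction n with
  | zero => simp
  | succ n ih =>
    rw [hermite_succ (n + 1), derivative_sub, derivative_mul, derivative_X, one_mul, ih,
      derivative_mul, derivative_C, zero_mul, zero_add, hermite_succ n]
    push_cast [C_add, C_1]
    ring

lemma rpow_natCast_div_two {x : ℝ} (hx : 0 ≤ x) (n : ℕ) : x ^ ((n : ℝ) / 2) = √x ^ n := by
  rw [sqrt_eq_rpow, ← rpow_natCast, ← rpow_mul hx]
  ring_nf

noncomputable def physHermitePoly (n : ℕ) : ℝ[X] :=
  C (√2 ^ n) * ((hermite n).map (algebraMap ℤ ℝ)).comp (C √2 * X)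

lemma physHermite_eq_eval (n : ℕ) (x : ℝ) : physHermite n x = (physHermitePoly n).eval x := by
  rw [physHermite, physHermitePoly, eval_mul, eval_comp, eval_map_algebraMap,
    rpow_natCast_div_two zero_le_two]
  simp [mul_comm x]

lemma C_sqrt_two_mul_self : C √2 * C √2 = (C 2 : ℝ[X]) := by
  rw [← C_mul, mul_self_sqrt zero_le_two]

lemma physHermitePoly_zero : physHermitePoly 0 = 1 := by
  simp [physHermitePoly]

lemma physHermitePoly_one : physHermitePoly 1 = C 2 * X := by
  simp [physHermitePoly, ← C_sqrt_two_mul_self, mul_assoc]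

lemma physHermitePoly_succ (n : ℕ) :
    physHermitePoly (n + 1) = C 2 * X * physHermitePoly n - derivative (physHermitePoly n) := by
  rw [physHermitePoly, physHermitePoly, derivative_C_mul, derivative_comp, derivative_map,
    derivative_C_mul_X, hermite_succ]
  simp only [Polynomial.map_sub, Polynomial.map_mul, map_X, sub_comp, mul_comp, X_comp, pow_succ,
    C_mul, ← C_sqrt_two_mul_self]
  ring

lemma derivative_physHermitePoly_succ (n : ℕ) :
    derivative (physHermitePoly (n + 1)) = C (2 * ((n : ℝ) + 1)) * physHermitePoly n := by
  rw [physHermitePoly, physHermitePoly, derivative_C_mul, derivative_comp, derivative_map,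
    derivative_hermite_succ, derivative_C_mul_X]
  simp only [Polynomial.map_mul, Polynomial.map_add, Polynomial.map_natCast, Polynomial.map_one,
    map_add, map_natCast, map_one, mul_comp, add_comp, natCast_comp, one_comp, pow_succ, C_mul,
    ← C_sqrt_two_mul_self]
  ring

lemma physHermitePoly_add_two (n : ℕ) :
    physHermitePoly (n + 2) =
      C 2 * X * physHermitePoly (n + 1) - C (2 * ((n : ℝ) + 1)) * physHermitePoly n := by
  rw [physHermitePoly_succ (n + 1), derivative_physHermitePoly_succ]

lemma integrable_eval_mul_exp_neg_sq (p : ℝ[X]) :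
    Integrable fun t => p.eval t * exp (-t ^ 2) := by
  simp_rw [eval_eq_sum_range, Finset.sum_mul, mul_assoc]
  refine integrable_finsetSum _ fun k _ => Integrable.const_mul ?_ _
  simpa [rpow_natCast] using
    integrable_rpow_mul_exp_neg_mul_sq one_pos (s := k) (by linarith [k.cast_nonneg (α := ℝ)])

noncomputable def gaussIntegral : ℝ[X] →ₗ[ℝ] ℝ where
  toFun p := ∫ t, p.eval t * exp (-t ^ 2)
  map_add' p q := by
    simp only [eval_add, add_mul]
    exact integral_add (integrable_eval_mul_exp_neg_sq p) (integrable_eval_mul_exp_neg_sq q)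
  map_smul' c p := by
    simp only [eval_smul, smul_eq_mul, mul_assoc, integral_const_mul, RingHom.id_apply]

lemma gaussIntegral_apply (p : ℝ[X]) : gaussIntegral p = ∫ t, p.eval t * exp (-t ^ 2) := rfl

lemma gaussIntegral_one : gaussIntegral 1 = √π := by
  simpa [gaussIntegral_apply] using integral_gaussian 1

lemma hasDerivAt_exp_neg_sq (t : ℝ) :
    HasDerivAt (fun t => exp (-t ^ 2)) (exp (-t ^ 2) * -(2 * t)) t := by
  simpa using (hasDerivAt_pow 2 t).fun_neg.exp

lemma gaussIntegral_X_mul (p : ℝ[X]) :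
    gaussIntegral (X * p) = gaussIntegral (derivative p) / 2 := by
  have hderiv : ∀ t, HasDerivAt (fun t => p.eval t * exp (-t ^ 2))
      ((derivative p).eval t * exp (-t ^ 2) - 2 * ((X * p).eval t * exp (-t ^ 2))) t := by
    intro t
    refine ((p.hasDerivAt t).mul (hasDerivAt_exp_neg_sq t)).congr_deriv ?_
    simp only [eval_mul, eval_X]
    ring
  have hint := (integrable_eval_mul_exp_neg_sq (X * p)).const_mul 2
  have h := integral_eq_zero_of_hasDerivAt_of_integrable hderiv
    ((integrable_eval_mul_exp_neg_sq _).sub hint) (integrable_eval_mul_exp_neg_sq p)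
  rw [integral_sub (integrable_eval_mul_exp_neg_sq _) hint, integral_const_mul] at h
  rw [gaussIntegral_apply, gaussIntegral_apply]
  linarith

lemma gaussIntegral_X : gaussIntegral X = 0 := by
  simpa using gaussIntegral_X_mul 1

lemma gaussIntegral_physHermitePoly_comp {a b : ℝ} (h : a ^ 2 + b ^ 2 = 1) (s : ℝ) (n : ℕ) :
    gaussIntegral ((physHermitePoly n).comp (C a * X + C (b * s))) =
      √π * b ^ n * (physHermitePoly n).eval s := by
  set q : ℝ[X] := C a * X + C (b * s)
  induction n using Nat.twoStepInduction with
  | zero => simp [physHermitePoly_zero, gaussIntegral_one]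
  | one =>
    have hq : (physHermitePoly 1).comp q = (2 * a) • X + (2 * b * s) • (1 : ℝ[X]) := by
      simp only [physHermitePoly_one, q, smul_eq_C_mul, mul_comp, C_comp, X_comp, C_mul]
      ring
    rw [hq, map_add, map_smul, map_smul, gaussIntegral_X, gaussIntegral_one, physHermitePoly_one]
    simp only [smul_eq_mul, eval_mul, eval_C, eval_X]
    ring
  | more n ih₀ ih₁ =>
    set R₀ := (physHermitePoly n).comp q
    set R₁ := (physHermitePoly (n + 1)).comp q
    have hR : (physHermitePoly (n + 2)).comp q =
        (2 * a) • (X * R₁) + (2 * b * s) • R₁ - (2 * ((n : ℝ) + 1)) • R₀ := by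
      simp only [physHermitePoly_add_two, R₀, R₁, q, smul_eq_C_mul, sub_comp, mul_comp, C_comp,
        X_comp, C_mul]
      ring
    have hX : gaussIntegral (X * R₁) = a * ((n : ℝ) + 1) * gaussIntegral R₀ := by
      have : derivative R₁ = (2 * a * ((n : ℝ) + 1)) • R₀ := by
        simp only [R₁, R₀, q, derivative_comp, derivative_physHermitePoly_succ, mul_comp, C_comp,
          derivative_add, derivative_C_mul_X, derivative_C, add_zero, smul_eq_C_mul]
        simp only [C_mul, C_add, C_1]
        ring
      rw [gaussIntegral_X_mul, this, map_smul, smul_eq_mul]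
      ring
    rw [hR, map_sub, map_add, map_smul, map_smul, map_smul, smul_eq_mul, smul_eq_mul, smul_eq_mul,
      hX, ih₀, ih₁, physHermitePoly_add_two]
    simp only [eval_sub, eval_mul, eval_C, eval_X]
    linear_combination (2 * ((n : ℝ) + 1) * √π * b ^ n * (physHermitePoly n).eval s) * h

lemma gaussIntegral_physHermitePoly_mul_self (n : ℕ) :
    gaussIntegral (physHermitePoly n * physHermitePoly n) = 2 ^ n * n.factorial * √π := by
  induction n with
  | zero => simp [physHermitePoly_zero, gaussIntegral_one]
  | succ n ih =>
    set P₀ := physHermitePoly n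
    set P₁ := physHermitePoly (n + 1)
    have hsq : P₁ * P₁ = (2 : ℝ) • (X * (P₁ * P₀)) - P₁ * derivative P₀ := by
      nth_rw 2 [show P₁ = C 2 * X * P₀ - derivative P₀ from physHermitePoly_succ n]
      rw [smul_eq_C_mul]
      ring
    have hderiv :
        derivative (P₁ * P₀) = (2 * ((n : ℝ) + 1)) • (P₀ * P₀) + P₁ * derivative P₀ := by
      rw [derivative_mul, derivative_physHermitePoly_succ, smul_eq_C_mul]
      ring
    rw [hsq, map_sub, map_smul, gaussIntegral_X_mul, hderiv, map_add, map_smul, ih,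
      Nat.factorial_succ]
    push_cast
    ring

lemma integral_physHermite_mul_exp_neg_sq {a b : ℝ} (h : a ^ 2 + b ^ 2 = 1) (s : ℝ) (n : ℕ) :
    ∫ t, physHermite n (a * t + b * s) * exp (-t ^ 2) = √π * b ^ n * physHermite n s := by
  simpa [gaussIntegral_apply, physHermite_eq_eval, eval_comp] using
    gaussIntegral_physHermitePoly_comp h s n

lemma integral_physHermite_sq_mul_exp_neg_sq (n : ℕ) :
    ∫ x, physHermite n x ^ 2 * exp (-x ^ 2) = 2 ^ n * n.factorial * √π := by
  simpa [gaussIntegral_apply, physHermite_eq_eval, sq] using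
    gaussIntegral_physHermitePoly_mul_self n

lemma Polynomial.abs_eval_le (p : ℝ[X]) (x : ℝ) :
    |p.eval x| ≤
      (∑ i ∈ Finset.range (p.natDegree + 1), |p.coeff i|) * (1 + x ^ 2) ^ p.natDegree := by
  rw [eval_eq_sum_range, Finset.sum_mul]
  refine (Finset.abs_sum_le_sum_abs _ _).trans (Finset.sum_le_sum fun i hi => ?_)
  rw [abs_mul, abs_pow]
  have habs : |x| ≤ 1 + x ^ 2 := by nlinarith [sq_abs x, sq_nonneg (|x| - 1)]
  gcongr
  calc |x| ^ i ≤ (1 + x ^ 2) ^ i := pow_le_pow_left₀ (abs_nonneg x) habs i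
    _ ≤ (1 + x ^ 2) ^ p.natDegree :=
      pow_le_pow_right₀ (by nlinarith) (Nat.lt_succ_iff.mp (Finset.mem_range.mp hi))

section Fubini

variable {α β γ E : Type*} [MeasureSpace α] [MeasureSpace β] [MeasureSpace γ]
  [SFinite (volume : Measure α)] [SFinite (volume : Measure β)] [SFinite (volume : Measure γ)]
  [NormedAddCommGroup E] [NormedSpace ℝ E]

lemma integral_prod_prod {F : α × β × γ → E} (hF : Integrable F) :
    ∫ v, F v = ∫ x, ∫ y, ∫ z, F (x, y, z) := by
  rw [Measure.volume_eq_prod] at hF ⊢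
  rw [integral_prod _ hF]
  refine integral_congr_ae ?_
  filter_upwards [hF.prod_right_ae] with x hx
  rw [Measure.volume_eq_prod] at hx ⊢
  exact integral_prod _ hx

end Fubini

lemma integrable_mul_exp_neg_sq_prod_of_abs_le {f : ℝ × ℝ × ℝ → ℝ} (hf : Continuous f) {C : ℝ}
    {N : ℕ} (hbound : ∀ x y z, |f (x, y, z)| ≤ C * ((1 + x ^ 2) * (1 + y ^ 2) * (1 + z ^ 2)) ^ N) :
    Integrable fun v : ℝ × ℝ × ℝ =>
      f v * (exp (-v.1 ^ 2) * (exp (-v.2.1 ^ 2) * exp (-v.2.2 ^ 2))) := by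
  set g : ℝ → ℝ := fun t => (1 + t ^ 2) ^ N * exp (-t ^ 2)
  have hg : Integrable g := by
    have := integrable_eval_mul_exp_neg_sq ((1 + X ^ 2) ^ N)
    simp only [eval_pow, eval_add, eval_one, eval_X] at this
    exact this
  have hprod : Integrable fun v : ℝ × ℝ × ℝ => g v.1 * (g v.2.1 * g v.2.2) := by
    rw [Measure.volume_eq_prod, Measure.volume_eq_prod]
    exact hg.mul_prod (hg.mul_prod hg)
  refine (hprod.const_mul C).mono' (by fun_prop) (ae_of_all _ fun ⟨x, y, z⟩ => ?_)
  simp only [Real.norm_eq_abs, abs_mul, abs_of_pos (exp_pos _)]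
  calc |f (x, y, z)| * (exp (-x ^ 2) * (exp (-y ^ 2) * exp (-z ^ 2)))
      ≤ C * ((1 + x ^ 2) * (1 + y ^ 2) * (1 + z ^ 2)) ^ N *
          (exp (-x ^ 2) * (exp (-y ^ 2) * exp (-z ^ 2))) := by gcongr; exact hbound x y z
    _ = C * (g x * (g y * g z)) := by simp only [g, mul_pow]; ring

lemma hermiteFun_mul_hermiteFun (m : ℕ) (x u : ℝ) :
    hermiteFun m x * hermiteFun m u =
      (2 ^ m * m.factorial * √π)⁻¹ * (physHermite m x * physHermite m u) *
        exp (-(x ^ 2 + u ^ 2) / 2) := by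
  have hc : (0 : ℝ) < 2 ^ m * m.factorial * √π := by positivity
  have hsq : ((2 ^ m * m.factorial * √π) ^ (-(1 / 2 : ℝ))) ^ 2 =
      (2 ^ m * m.factorial * √π)⁻¹ := by
    rw [← rpow_natCast, ← rpow_mul hc.le]
    norm_num [rpow_neg_one]
  rw [hermiteFun, hermiteFun, ← hsq, neg_add, add_div, exp_add]
  ring_nf

lemma hermiteFun_zero_mul_hermiteFun_zero (y v : ℝ) :
    hermiteFun 0 y * hermiteFun 0 v = (√π)⁻¹ * exp (-(y ^ 2 + v ^ 2) / 2) := by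
  simp [hermiteFun_mul_hermiteFun, physHermite]

lemma hermiteFun_rotated_integrand_eq (m : ℕ) (x y z : ℝ) :
    hermiteFun m x * hermiteFun 0 y * hermiteFun 0 z * hermiteFun m ((2 * x + 2 * y - z) / 3) *
        hermiteFun 0 ((-x + 2 * y + 2 * z) / 3) * hermiteFun 0 ((2 * x - y + 2 * z) / 3) =
      (2 ^ m * m.factorial * √π)⁻¹ * π⁻¹ * (physHermite m x * exp (-x ^ 2) *
        (physHermite m ((2 * x + 2 * y - z) / 3) * exp (-y ^ 2) * exp (-z ^ 2))) := by
  have hπ : (√π)⁻¹ * (√π)⁻¹ = π⁻¹ := by rw [← mul_inv, mul_self_sqrt pi_pos.le]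
  -- the rotation preserves `x² + y² + z²`
  have hexp : exp (-(x ^ 2 + ((2 * x + 2 * y - z) / 3) ^ 2) / 2) *
      exp (-(y ^ 2 + ((-x + 2 * y + 2 * z) / 3) ^ 2) / 2) *
      exp (-(z ^ 2 + ((2 * x - y + 2 * z) / 3) ^ 2) / 2) =
        exp (-x ^ 2) * exp (-y ^ 2) * exp (-z ^ 2) := by
    simp only [← exp_add]
    ring_nf
  calc _ = (hermiteFun m x * hermiteFun m ((2 * x + 2 * y - z) / 3)) *
        (hermiteFun 0 y * hermiteFun 0 ((-x + 2 * y + 2 * z) / 3)) *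
        (hermiteFun 0 z * hermiteFun 0 ((2 * x - y + 2 * z) / 3)) := by ring
    _ = _ := by
      rw [hermiteFun_mul_hermiteFun, hermiteFun_zero_mul_hermiteFun_zero,
        hermiteFun_zero_mul_hermiteFun_zero, ← hπ]
      linear_combination ((2 ^ m * m.factorial * √π)⁻¹ * (√π)⁻¹ * (√π)⁻¹ *
        (physHermite m x * physHermite m ((2 * x + 2 * y - z) / 3))) * hexp

lemma integrable_physHermite_rotated (m : ℕ) :
    Integrable fun v : ℝ × ℝ × ℝ => physHermite m v.1 * exp (-v.1 ^ 2) *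
      (physHermite m ((2 * v.1 + 2 * v.2.1 - v.2.2) / 3) * exp (-v.2.1 ^ 2) *
        exp (-v.2.2 ^ 2)) := by
  set P := physHermitePoly m
  set N := P.natDegree
  set K := ∑ i ∈ Finset.range (N + 1), |P.coeff i|
  have hP : ∀ t, |physHermite m t| ≤ K * (1 + t ^ 2) ^ N := fun t => by
    rw [physHermite_eq_eval]; exact P.abs_eval_le t
  refine (integrable_mul_exp_neg_sq_prod_of_abs_le (f := fun v => physHermite m v.1 *
      physHermite m ((2 * v.1 + 2 * v.2.1 - v.2.2) / 3)) (C := K * K) (N := N + N)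
      (by simp only [physHermite_eq_eval]; fun_prop) fun x y z => ?_).congr
    (ae_of_all _ fun v => by ring)
  set w := (1 + x ^ 2) * (1 + y ^ 2) * (1 + z ^ 2)
  set u := (2 * x + 2 * y - z) / 3
  have hw : 1 + x ^ 2 + y ^ 2 + z ^ 2 ≤ w := by
    nlinarith [mul_nonneg (sq_nonneg x) (sq_nonneg y), mul_nonneg (sq_nonneg y) (sq_nonneg z),
      mul_nonneg (sq_nonneg x) (sq_nonneg z),
      mul_nonneg (mul_nonneg (sq_nonneg x) (sq_nonneg y)) (sq_nonneg z)]
  have hu : u ^ 2 ≤ x ^ 2 + y ^ 2 + z ^ 2 := by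
    simp only [u]
    nlinarith [sq_nonneg (-x + 2 * y + 2 * z), sq_nonneg (2 * x - y + 2 * z)]
  have hK : 0 ≤ K := Finset.sum_nonneg fun i _ => abs_nonneg _
  calc |physHermite m x * physHermite m u|
      ≤ (K * (1 + x ^ 2) ^ N) * (K * (1 + u ^ 2) ^ N) := by
        rw [abs_mul]; exact mul_le_mul (hP x) (hP u) (abs_nonneg _) (by positivity)
    _ ≤ (K * w ^ N) * (K * w ^ N) := by
        gcongr <;> nlinarith [sq_nonneg y, sq_nonneg z]
    _ = K * K * w ^ (N + N) := by ring

lemma integral_integral_physHermite_rotated (m : ℕ) (x : ℝ) :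
    ∫ y, ∫ z, physHermite m ((2 * x + 2 * y - z) / 3) * exp (-y ^ 2) * exp (-z ^ 2) =
      π * (2 / 3) ^ m * physHermite m x := by
  have h2 : √2 * √2 = 2 := mul_self_sqrt zero_le_two
  have hz : ∀ y, ∫ z, physHermite m ((2 * x + 2 * y - z) / 3) * exp (-y ^ 2) * exp (-z ^ 2) =
      √π * (2 * √2 / 3) ^ m * (physHermite m (√2 / 2 * y + √2 / 2 * x) * exp (-y ^ 2)) := by
    intro y
    have harg : ∀ z, (2 * x + 2 * y - z) / 3 =
        -(1 / 3) * z + 2 * √2 / 3 * (√2 / 2 * y + √2 / 2 * x) := by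
      intro z; linear_combination (-(x + y) / 3) * h2
    simp_rw [harg, mul_right_comm _ (exp (-y ^ 2)), integral_mul_const]
    rw [integral_physHermite_mul_exp_neg_sq (by linear_combination (4 / 9) * h2)]
    ring
  have hy := integral_physHermite_mul_exp_neg_sq (a := √2 / 2) (b := √2 / 2)
    (by linear_combination (1 / 2) * h2) x m
  have hb : 2 * √2 / 3 * (√2 / 2) = 2 / 3 := by linear_combination (1 / 3) * h2
  simp_rw [hz, integral_const_mul, hy]
  rw [← hb, mul_pow]
  linear_combination
    ((2 * √2 / 3) ^ m * (√2 / 2) ^ m * physHermite m x) * mul_self_sqrt pi_pos.le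

/-- the three-copy rotation matrix element
`⟨m,0,0|U_{π/3}|m,0,0⟩ = (2/3)^m`, where the rotation by `π/3` about the axis
`(1,1,1)/√3` acts by the orthogonal matrix `(1/3)[[2,−1,2],[2,2,−1],[−1,2,2]]`. -/
theorem hermite_three_copy_rotation_matrix_element (m : ℕ) :
    (∫ p : ℝ × ℝ × ℝ,
        hermiteFun m p.1 * hermiteFun 0 p.2.1 * hermiteFun 0 p.2.2 *
          hermiteFun m ((2 * p.1 + 2 * p.2.1 - p.2.2) / 3) *
          hermiteFun 0 ((-p.1 + 2 * p.2.1 + 2 * p.2.2) / 3) *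
          hermiteFun 0 ((2 * p.1 - p.2.1 + 2 * p.2.2) / 3))
      = (2 / 3 : ℝ) ^ m := by
  simp_rw [hermiteFun_rotated_integrand_eq]
  rw [integral_const_mul, integral_prod_prod (integrable_physHermite_rotated m)]
  simp_rw [integral_const_mul, integral_integral_physHermite_rotated]
  calc _ = (2 ^ m * m.factorial * √π)⁻¹ * π⁻¹ *
        (π * (2 / 3) ^ m * ∫ x, physHermite m x ^ 2 * exp (-x ^ 2)) := by
        congr 1
        rw [← integral_const_mul]
        congr 1 with x
        ring
    _ = (2 / 3 : ℝ) ^ m := by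
        rw [integral_physHermite_sq_mul_exp_neg_sq]
        field_simp
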